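/- Let R be a commutative integral domain, let ⋆ be a semistar operation of finite type on R, and let I be a quasi-⋆-ideal of R. If every minimal prime ideal of I is the radical of a ⋆-finite ideal of R, then the set Min(I) of prime ideals of R minimal over I is finite. -/

import Mathlib

/-!
Every minimal prime `P` of `I` is again a quasi-`⋆`-ideal: if `x ∈ P^⋆ ∩ R`, finite type puts `x`
in `J^⋆` for a finitely generated `J ⊆ P`, and minimality of `P` gives `t ∉ P` with `t J^n ⊆ I`,
so that `t x^n ∈ I^⋆ ∩ R = I ⊆ P`. Hence if `P = √L` with `L^⋆ = F^⋆` and `F` finitely generated,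
then `P` is the only minimal prime of `I` containing `F`. Finiteness follows by compactness: a
nonprincipal ultrafilter on infinitely many minimal primes has a prime limit containing `I`, and a
minimal prime `P₀` below that limit has its `F` inside eventually every member of the ultrafilter,
which forces the ultrafilter to be principal at `P₀`.
-/

open Pointwise

/-- A semistar operation on an integral domain `R` with quotient field `K`:
a map `E ↦ E^⋆` on the nonzero `R`-submodules of `K` satisfying the usual axioms.
(The map is defined on all submodules, but the axioms are only required for the
nonzero ones.) -/
structure SemistarOperation (R K : Type*) [CommRing R] [IsDomain R] [Field K]
    [Algebra R K] [IsFractionRing R K] where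
  star : Submodule R K → Submodule R K
  smul_star : ∀ (x : K), x ≠ 0 → ∀ E : Submodule R K, E ≠ ⊥ → star (x • E) = x • star E
  mono : ∀ E F : Submodule R K, E ≠ ⊥ → E ≤ F → star E ≤ star F
  le_star : ∀ E : Submodule R K, E ≠ ⊥ → E ≤ star E
  star_star : ∀ E : Submodule R K, E ≠ ⊥ → star (star E) = star E

namespace SemistarOperation

variable {R K : Type*} [CommRing R] [IsDomain R] [Field K] [Algebra R K] [IsFractionRing R K]
variable (s : SemistarOperation R K)

/-- `⋆` is of finite type: for every nonzero submodule `E`, the module `E^⋆` is the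
union of the `F^⋆` over the nonzero finitely generated submodules `F ⊆ E`. -/
def FiniteType : Prop :=
  ∀ E : Submodule R K, E ≠ ⊥ → ∀ x : K,
    x ∈ s.star E ↔ ∃ F : Submodule R K, F.FG ∧ F ≠ ⊥ ∧ F ≤ E ∧ x ∈ s.star F

/-- `I^⋆`, for an ideal `I` of `R` (viewing `I` as a submodule of `K`). -/
def idealStar (I : Ideal R) : Submodule R K :=
  s.star (Submodule.map (Algebra.linearMap R K) I)

/-- `I^⋆ ∩ R`, as an ideal of `R`. -/
def contract (I : Ideal R) : Ideal R :=
  Submodule.comap (Algebra.linearMap R K) (s.idealStar I)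

/-- A (nonzero) ideal `I` of `R` is a quasi-`⋆`-ideal if `I^⋆ ∩ R = I`. -/
def IsQuasiStarIdeal (I : Ideal R) : Prop :=
  I ≠ ⊥ ∧ s.contract I = I

/-- A nonzero ideal `L` of `R` is `⋆`-finite if `L^⋆ = F^⋆` for some nonzero
finitely generated ideal `F` of `R`. -/
def IsStarFinite (L : Ideal R) : Prop :=
  L ≠ ⊥ ∧ ∃ F : Ideal R, F.FG ∧ F ≠ ⊥ ∧ s.idealStar F = s.idealStar L

/-- `⋆` is stable: it distributes over finite intersections (of nonzero submodules
with nonzero intersection). -/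
def Stable : Prop :=
  ∀ E F : Submodule R K, E ≠ ⊥ → F ≠ ⊥ → E ⊓ F ≠ ⊥ →
    s.star (E ⊓ F) = s.star E ⊓ s.star F

/-- `⋆-Min(I)`: the set of quasi-`⋆`-prime ideals of `R` minimal over `I`. -/
def starMin (I : Ideal R) : Set (Ideal R) :=
  {P | Minimal (fun Q : Ideal R => Q.IsPrime ∧ s.IsQuasiStarIdeal Q ∧ I ≤ Q) P}

/-- A nonzero ideal `I` of `R` is a `⋆`-SFT-ideal if there are a finitely generated
ideal `J ⊆ I` and a positive integer `k` with `a ^ k ∈ J^⋆` for every `a ∈ I^⋆`. -/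
def IsSFT (I : Ideal R) : Prop :=
  I ≠ ⊥ ∧ ∃ J : Ideal R, J.FG ∧ J ≤ I ∧ ∃ k : ℕ, 0 < k ∧
    ∀ a ∈ s.idealStar I, a ^ k ∈ s.idealStar J

/-- `R` is a `⋆`-SFT-ring if every nonzero ideal of `R` is a `⋆`-SFT-ideal. -/
def IsSFTRing : Prop := ∀ I : Ideal R, I ≠ ⊥ → s.IsSFT I

end SemistarOperation

open Filter

theorem Submodule.pow_ne_bot {R A : Type*} [CommSemiring R] [Semiring A] [Algebra R A]
    [NoZeroDivisors A] {M : Submodule R A} (hM : M ≠ ⊥) (n : ℕ) : M ^ n ≠ ⊥ := by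
  rw [← Submodule.zero_eq_bot] at hM ⊢
  exact pow_ne_zero n hM

theorem Submodule.smul_ne_bot {R K : Type*} [CommSemiring R] [Field K] [Algebra R K]
    {E : Submodule R K} {x : K} (hx : x ≠ 0) (hE : E ≠ ⊥) : x • E ≠ ⊥ := fun h =>
  hE (by rw [← inv_smul_smul₀ hx E, h, Submodule.smul_bot'])

theorem IsLocalization.coeSubmodule_pow {R S : Type*} [CommSemiring R] [CommSemiring S]
    [Algebra R S] (J : Ideal R) (n : ℕ) : coeSubmodule S (J ^ n) = coeSubmodule S J ^ n :=
  Submodule.map_pow (M := J) (Algebra.ofId R S) n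

theorem IsFractionRing.coeSubmodule_ne_bot {R K : Type*} [CommRing R] [Field K] [Algebra R K]
    [IsFractionRing R K] {J : Ideal R} (hJ : J ≠ ⊥) : IsLocalization.coeSubmodule K J ≠ ⊥ :=
  fun h => hJ (coeSubmodule_injective R K (h.trans (IsLocalization.coeSubmodule_bot K).symm))

theorem IsLocalization.exists_forall_mul_mem_of_map_le {R : Type*} [CommSemiring R]
    (M : Submonoid R) (S : Type*) [CommSemiring S] [Algebra R S] [IsLocalization M S]
    {I J : Ideal R} (hJ : J.FG) (hJI : J.map (algebraMap R S) ≤ I.map (algebraMap R S)) :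
    ∃ m ∈ M, ∀ x ∈ J, m * x ∈ I := by
  induction J, hJ using Submodule.fg_induction with
  | singleton x =>
    obtain ⟨m, hm, hmx⟩ := (algebraMap_mem_map_algebraMap_iff M S I x).mp
      (hJI (Ideal.mem_map_of_mem _ (Submodule.mem_span_singleton_self x)))
    refine ⟨m, hm, fun y hy => ?_⟩
    obtain ⟨r, rfl⟩ := Submodule.mem_span_singleton.mp hy
    rw [smul_eq_mul, mul_left_comm]
    exact I.mul_mem_left r hmx
  | sup J₁ J₂ _ _ ih₁ ih₂ =>
    rw [Ideal.map_sup, sup_le_iff] at hJI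
    obtain ⟨m₁, hm₁, h₁⟩ := ih₁ hJI.1
    obtain ⟨m₂, hm₂, h₂⟩ := ih₂ hJI.2
    refine ⟨m₁ * m₂, M.mul_mem hm₁ hm₂, fun y hy => ?_⟩
    obtain ⟨y₁, hy₁, y₂, hy₂, rfl⟩ := Submodule.mem_sup.mp hy
    rw [mul_add, mul_right_comm m₁ m₂ y₁, mul_assoc m₁ m₂ y₂]
    exact I.add_mem (I.mul_mem_right m₂ (h₁ y₁ hy₁)) (I.mul_mem_left m₁ (h₂ y₂ hy₂))

theorem Ideal.exists_forall_mul_mem_of_mem_minimalPrimes {R : Type*} [CommSemiring R]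
    {I P J : Ideal R} (hP : P ∈ I.minimalPrimes) (hJ : J.FG) (hJP : J ≤ P) :
    ∃ t ∉ P, ∃ n, ∀ x ∈ J ^ n, t * x ∈ I := by
  have := hP.isPrime
  let Rₚ := Localization.AtPrime P
  have hrad : J.map (algebraMap R Rₚ) ≤ (I.map (algebraMap R Rₚ)).radical := by
    rw [IsLocalization.AtPrime.radical_map_of_mem_minimalPrimes Rₚ P I hP]
    exact Ideal.map_mono hJP
  obtain ⟨n, hn⟩ := Ideal.exists_pow_le_of_le_radical_of_fg hrad (hJ.map _)
  rw [← Ideal.map_pow] at hn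
  obtain ⟨t, ht, hJI⟩ :=
    IsLocalization.exists_forall_mul_mem_of_map_le P.primeCompl Rₚ hJ.pow hn
  exact ⟨t, ht, n, hJI⟩

namespace Ideal

variable {R ι : Type*} [CommSemiring R]

def ultrafilterLimit (U : Ultrafilter ι) (P : ι → Ideal R) : Ideal R where
  carrier := {r | ∀ᶠ i in U, r ∈ P i}
  add_mem' ha hb := (ha.and hb).mono fun i hi => (P i).add_mem hi.1 hi.2
  zero_mem' := Eventually.of_forall fun i => (P i).zero_mem
  smul_mem' c _ hx := hx.mono fun i hi => (P i).smul_mem c hi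

variable {U : Ultrafilter ι} {P : ι → Ideal R}

@[simp]
theorem mem_ultrafilterLimit {r : R} : r ∈ ultrafilterLimit U P ↔ ∀ᶠ i in U, r ∈ P i :=
  Iff.rfl

theorem isPrime_ultrafilterLimit (hP : ∀ i, (P i).IsPrime) : (ultrafilterLimit U P).IsPrime where
  ne_top' h := by
    obtain ⟨i, hi⟩ := (mem_ultrafilterLimit.mp (h ▸ Submodule.mem_top : (1 : R) ∈ _)).exists
    exact (hP i).ne_top ((eq_top_iff_one _).mpr hi)
  mem_or_mem' hxy := Ultrafilter.eventually_or.mp (hxy.mono fun i hi => (hP i).mem_or_mem hi)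

theorem FG.eventually_le_of_le_ultrafilterLimit {F : Ideal R} (hF : F.FG)
    (h : F ≤ ultrafilterLimit U P) : ∀ᶠ i in U, F ≤ P i := by
  obtain ⟨T, rfl⟩ := hF
  have : ∀ g ∈ T, ∀ᶠ i in U, g ∈ P i := fun g hg => h (subset_span hg)
  exact (eventually_all_finset T).mpr this |>.mono fun i hi => span_le.mpr hi

theorem minimalPrimes_finite_of_forall_exists_fg {I : Ideal R}
    (h : ∀ P ∈ I.minimalPrimes, ∃ F : Ideal R, F.FG ∧ F ≤ P ∧
      ∀ Q ∈ I.minimalPrimes, F ≤ Q → Q = P) :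
    I.minimalPrimes.Finite := by
  by_contra hinf
  have : Infinite I.minimalPrimes := Set.infinite_coe_iff.mpr hinf
  let U := hyperfilter I.minimalPrimes
  let Q := ultrafilterLimit U fun P => P.1
  have : Q.IsPrime := isPrime_ultrafilterLimit fun P => P.2.isPrime
  have hIQ : I ≤ Q := fun r hr => Eventually.of_forall fun P => P.2.le hr
  obtain ⟨P₀, hP₀, hP₀Q⟩ := exists_minimalPrimes_le hIQ
  obtain ⟨F, hF, hFP₀, huniq⟩ := h P₀ hP₀
  have hprincipal : ∀ᶠ P in U, P = (⟨P₀, hP₀⟩ : I.minimalPrimes) :=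
    (hF.eventually_le_of_le_ultrafilterLimit (hFP₀.trans hP₀Q)).mono fun P hP =>
      Subtype.ext (huniq P P.2 hP)
  exact notMem_hyperfilter_of_finite (Set.finite_singleton _) hprincipal

end Ideal

namespace SemistarOperation

open IsLocalization IsFractionRing

variable {R K : Type*} [CommRing R] [IsDomain R] [Field K] [Algebra R K] [IsFractionRing R K]
  (s : SemistarOperation R K)

section Submodules

variable {E F : Submodule R K}

theorem star_ne_bot (hE : E ≠ ⊥) : s.star E ≠ ⊥ :=
  ne_bot_of_le_ne_bot hE (s.le_star E hE)

theorem mul_star_le (E : Submodule R K) (hF : F ≠ ⊥) : E * s.star F ≤ s.star (E * F) := by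
  refine Submodule.mul_le.mpr fun e he f hf => ?_
  rcases eq_or_ne e 0 with rfl | he0
  · rw [zero_mul]
    exact zero_mem _
  have hle : e • F ≤ E * F := by
    rw [← Submodule.span_singleton_mul]
    exact mul_le_mul' ((Submodule.span_singleton_le_iff_mem _ _).mpr he) le_rfl
  have hef : e * f ∈ s.star (e • F) := by
    rw [s.smul_star e he0 F hF]
    exact Submodule.smul_mem_pointwise_smul f e _ hf
  exact s.mono _ _ (Submodule.smul_ne_bot he0 hF) hle hef

theorem star_mul_star_le (hE : E ≠ ⊥) (hF : F ≠ ⊥) :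
    s.star E * s.star F ≤ s.star (E * F) := by
  have hEF : E * F ≠ ⊥ := by simp [Submodule.mul_eq_bot, hE, hF]
  calc s.star E * s.star F ≤ s.star (s.star E * F) := s.mul_star_le _ hF
    _ ≤ s.star (s.star (E * F)) := by
      refine s.mono _ _ (by simp [Submodule.mul_eq_bot, s.star_ne_bot hE, hF]) ?_
      simpa only [mul_comm] using s.mul_star_le F hE
    _ = s.star (E * F) := s.star_star _ hEF

theorem pow_mem_star (hE : E ≠ ⊥) {x : K} (hx : x ∈ s.star E) (n : ℕ) :
    x ^ n ∈ s.star (E ^ n) := by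
  induction n with
  | zero =>
    have h1 : (1 : K) ∈ E ^ 0 := by
      rw [pow_zero]
      exact Submodule.one_le.mp le_rfl
    rw [pow_zero x]
    exact s.le_star _ (Submodule.pow_ne_bot hE 0) h1
  | succ n ih =>
    rw [pow_succ, pow_succ]
    exact s.star_mul_star_le (Submodule.pow_ne_bot hE n) hE (Submodule.mul_mem_mul ih hx)

theorem smul_star_le {y : K} (hy : y ≠ 0) (hE : E ≠ ⊥) (h : y • E ≤ F) :
    y • s.star E ≤ s.star F := by
  rw [← s.smul_star y hy E hE]
  exact s.mono _ _ (Submodule.smul_ne_bot hy hE) h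

end Submodules

section Ideals

variable {I J : Ideal R} {x : R}

theorem le_contract (J : Ideal R) : J ≤ s.contract J := by
  rcases eq_or_ne J ⊥ with rfl | hJ
  · exact bot_le
  exact fun r hr => s.le_star _ (coeSubmodule_ne_bot hJ) (Submodule.mem_map_of_mem hr)

theorem contract_mono {J' : Ideal R} (hJ : J ≠ ⊥) (h : J ≤ J') : s.contract J ≤ s.contract J' :=
  Submodule.comap_mono (s.mono _ _ (coeSubmodule_ne_bot hJ) (Submodule.map_mono h))

theorem pow_mem_contract (hJ : J ≠ ⊥) (hx : x ∈ s.contract J) (n : ℕ) :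
    x ^ n ∈ s.contract (J ^ n) := by
  show algebraMap R K (x ^ n) ∈ s.star (coeSubmodule K (J ^ n))
  rw [map_pow, coeSubmodule_pow]
  exact s.pow_mem_star (coeSubmodule_ne_bot hJ) hx n

theorem mul_mem_contract_of_forall_mul_mem {t : R} (ht : t ≠ 0) (hJ : J ≠ ⊥)
    (hJI : ∀ y ∈ J, t * y ∈ I) (hx : x ∈ s.contract J) : t * x ∈ s.contract I := by
  have hle : algebraMap R K t • coeSubmodule K J ≤ coeSubmodule K I := by
    rintro _ ⟨_, ⟨y, hy, rfl⟩, rfl⟩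
    exact ⟨t * y, hJI y hy, by simp⟩
  have ht' : algebraMap R K t ≠ 0 := (map_ne_zero_iff _ (IsFractionRing.injective R K)).mpr ht
  have := s.smul_star_le ht' (coeSubmodule_ne_bot hJ) hle
    (Submodule.smul_mem_pointwise_smul _ _ _ hx)
  rwa [smul_eq_mul, Algebra.linearMap_apply, ← map_mul] at this

variable {s} in
theorem FiniteType.exists_fg_le_of_mem_contract (hs : s.FiniteType) (hJ : J ≠ ⊥)
    (hx : x ∈ s.contract J) : ∃ F : Ideal R, F.FG ∧ F ≠ ⊥ ∧ F ≤ J ∧ x ∈ s.contract F := by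
  obtain ⟨E, hE, hE0, hEJ, hxE⟩ := (hs _ (coeSubmodule_ne_bot hJ) _).mp hx
  have hmap : coeSubmodule K (E.comap (Algebra.linearMap R K)) = E :=
    Submodule.map_comap_eq_self (hEJ.trans LinearMap.map_le_range)
  refine ⟨E.comap _, (coeSubmodule_fg _ (IsFractionRing.injective R K) _).mp (hmap ▸ hE),
    fun h => hE0 ?_, IsFractionRing.coeSubmodule_le_coeSubmodule.mp (hmap ▸ hEJ), ?_⟩
  · rw [← hmap, h, coeSubmodule_bot]
  · show _ ∈ s.star (coeSubmodule K _)
    rwa [hmap]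

theorem le_of_idealStar_eq {Q : Ideal R} (hIJ : s.idealStar I = s.idealStar J) (hJ : J ≠ ⊥)
    (hQ : s.contract Q = Q) (hJQ : J ≤ Q) : I ≤ Q :=
  calc I ≤ s.contract I := s.le_contract I
    _ = s.contract J := congrArg (Submodule.comap _) hIJ
    _ ≤ s.contract Q := s.contract_mono hJ hJQ
    _ = Q := hQ

theorem isQuasiStarIdeal_of_mem_minimalPrimes (hs : s.FiniteType) {P : Ideal R}
    (hI : s.IsQuasiStarIdeal I) (hP : P ∈ I.minimalPrimes) : s.IsQuasiStarIdeal P := by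
  have hPprime := hP.isPrime
  have hP0 : P ≠ ⊥ := ne_bot_of_le_ne_bot hI.1 hP.le
  refine ⟨hP0, le_antisymm (fun x hx => ?_) (s.le_contract P)⟩
  obtain ⟨J, hJ, hJ0, hJP, hxJ⟩ := hs.exists_fg_le_of_mem_contract hP0 hx
  obtain ⟨t, htP, n, hJI⟩ := Ideal.exists_forall_mul_mem_of_mem_minimalPrimes hP hJ hJP
  have htx : t * x ^ n ∈ I := hI.2 ▸ s.mul_mem_contract_of_forall_mul_mem
    (fun h => htP (h ▸ P.zero_mem)) (Submodule.pow_ne_bot hJ0 n) hJI (s.pow_mem_contract hJ0 hxJ n)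
  exact hPprime.mem_of_pow_mem n ((hPprime.mem_or_mem (hP.le htx)).resolve_left htP)

end Ideals

end SemistarOperation

/-- **Main theorem.**  Let `⋆` be a semistar operation of finite type on the integral
domain `R`, and let `I` be a quasi-`⋆`-ideal of `R`.  If every minimal prime ideal of
`I` is the radical of a `⋆`-finite ideal, then `I` has only finitely many minimal
prime ideals. -/
theorem minimalPrimes_finite_of_quasiStarIdeal {R K : Type*} [CommRing R] [IsDomain R]
    [Field K] [Algebra R K] [IsFractionRing R K] (s : SemistarOperation R K)
    (hs : s.FiniteType) (I : Ideal R) (hI : s.IsQuasiStarIdeal I)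
    (h : ∀ P ∈ I.minimalPrimes, ∃ L : Ideal R, s.IsStarFinite L ∧ P = L.radical) :
    I.minimalPrimes.Finite := by
  have hcontract : ∀ Q ∈ I.minimalPrimes, s.contract Q = Q := fun Q hQ =>
    (s.isQuasiStarIdeal_of_mem_minimalPrimes hs hI hQ).2
  refine Ideal.minimalPrimes_finite_of_forall_exists_fg fun P hP => ?_
  obtain ⟨L, ⟨hL0, F, hF, hF0, hFL⟩, rfl⟩ := h P hP
  refine ⟨F, hF, s.le_of_idealStar_eq hFL hL0 (hcontract _ hP) L.le_radical, fun Q hQ hFQ => ?_⟩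
  have hLQ : L ≤ Q := s.le_of_idealStar_eq hFL.symm hF0 (hcontract Q hQ) hFQ
  have hPQ : L.radical ≤ Q := hQ.isPrime.radical_le_iff.mpr hLQ
  exact le_antisymm (hQ.2 hP.1 hPQ) hPQ
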